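/- Let A be a Grothendieck abelian category and B a localizing subcategory satisfying (Inj). For every object M of A there is an exact sequence 0 → Γ(M) → M → Σ(M) → R^1Γ(M) → 0 (the two middle maps being the canonical ones), and there are natural isomorphisms R^iΣ(M) ≅ R^{i+1}Γ(M) for all i ≥ 1. -/

import Mathlib

/-!
STATEMENT 5. Let `A` be a Grothendieck abelian category and `B` a localizing
subcategory satisfying (Inj).  For every object `M` of `A` there is an exact
sequence `0 → Γ(M) → M → Σ(M) → R¹Γ(M) → 0` (the two middle maps being the
canonical ones), and there are natural isomorphisms `R^iΣ(M) ≅ R^{i+1}Γ(M)`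
for all `i ≥ 1`.

Encoding: `B = ker T` for an exact localization functor `T : A ⥤ Q` with fully
faithful right adjoint (section functor) `S`; the saturation functor is
`Σ = T ⋙ S` with unit `adj.unit`, and the torsion functor `Γ` is characterized
by `IsTorsionFunctor`.  The four term exact sequence is expressed by: the first
map is a monomorphism, the sequence is exact at `M` and at `Σ(M)` (for some
connecting map `δ : Σ(M) ⟶ R¹Γ(M)`), and `δ` is an epimorphism.
-/

open CategoryTheory Limits

universe v u u'

variable {A : Type u} [Category.{v} A] [Abelian A]
variable {Q : Type u'} [Category.{v} Q] [Abelian Q]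

/-- Membership in the localizing subcategory `B`, realized as the kernel of the
localization functor `T`. -/
def memB (T : A ⥤ Q) (N : A) : Prop := IsZero (T.obj N)

/-- `Γ` (together with the natural inclusion `ε : Γ ⟶ 𝟭 A`) is the torsion
functor with respect to the localizing subcategory `B = ker T`. -/
structure IsTorsionFunctor (T : A ⥤ Q) (Γ : A ⥤ A) (ε : Γ ⟶ 𝟭 A) : Prop where
  mem : ∀ M : A, memB T (Γ.obj M)
  mono : ∀ M : A, Mono (ε.app M)
  isMax : ∀ (M N : A) (f : N ⟶ M), Mono f → memB T N →
    ∃ g : N ⟶ Γ.obj M, g ≫ ε.app M = f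


/-!
For an injective `I`, property (Inj) makes `Γ(I)` an injective direct summand of `I`. The
complement `C` is injective and torsion-free, so its unit `C → Σ(C)` is a split monomorphism with
torsion cokernel; as no nonzero morphism goes from a torsion object to an object `S(X)`, it is an
isomorphism. Hence `0 → Γ(I) → I → Σ(I) → 0` is short exact for injective `I`. Applied degreewise
to an injective resolution `I•` of `M` this gives a short exact sequence of complexes
`Γ(I•) → I• → Σ(I•)` whose middle term has no cohomology in positive degrees, and its long exact
cohomology sequence yields both the four-term sequence and the isomorphisms
`R^iΣ(M) ≅ R^{i+1}Γ(M)`.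
-/

lemma CategoryTheory.Adjunction.isIso_map_unit_app {C D : Type*} [Category C] [Category D]
    {L : C ⥤ D} {R : D ⥤ C} (adj : L ⊣ R) [IsIso adj.counit] (X : C) :
    IsIso (L.map (adj.unit.app X)) :=
  have : IsIso (𝟙 (L.obj X)) := IsIso.id _
  IsIso.of_isIso_fac_right (adj.left_triangle_components X)

section ExactFunctor

variable (T : A ⥤ Q)

instance [PreservesFiniteLimits T] [PreservesFiniteColimits T] :
    ObjectProperty.IsSerreClass (memB T) :=
  inferInstanceAs (ObjectProperty.inverseImage (IsZero (C := Q)) T).IsSerreClass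

lemma memB_kernel_of_mono_map [PreservesFiniteLimits T] {X Y : A} (f : X ⟶ Y)
    [Mono (T.map f)] : memB T (kernel f) :=
  IsZero.of_mono_eq_zero (T.map (kernel.ι f)) <| (cancel_mono (T.map f)).1 <| by
    rw [← T.map_comp, kernel.condition, T.map_zero, zero_comp]

lemma memB_cokernel_of_epi_map [PreservesFiniteColimits T] {X Y : A} (f : X ⟶ Y)
    [Epi (T.map f)] : memB T (cokernel f) :=
  IsZero.of_epi_eq_zero (T.map (cokernel.π f)) <| (cancel_epi (T.map f)).1 <| by
    rw [← T.map_comp, cokernel.condition, T.map_zero, comp_zero]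

lemma mono_hom_of_mono_memB [PreservesFiniteLimits T] [PreservesFiniteColimits T]
    {X Y : ObjectProperty.FullSubcategory (memB T)} (f : X ⟶ Y) [Mono f] : Mono f.hom :=
  have := ObjectProperty.preservesMonomorphisms_ι_of_isNormalEpiCategory (memB T)
  (ObjectProperty.ι (memB T)).map_mono f

end ExactFunctor

section Localization

variable {T : A ⥤ Q} {S : Q ⥤ A}

lemma eq_zero_of_memB (adj : T ⊣ S) [S.PreservesZeroMorphisms] {N : A} {X : Q}
    (f : N ⟶ S.obj X) (hN : memB T N) : f = 0 := by
  rw [← Equiv.apply_symm_apply (adj.homEquiv N X) f, adj.homEquiv_unit,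
    (S.map_isZero hN).eq_of_tgt (adj.unit.app N) 0, zero_comp]

lemma memB_kernel_unit_app (adj : T ⊣ S) [IsIso adj.counit] [PreservesFiniteLimits T]
    (M : A) : memB T (kernel (adj.unit.app M)) :=
  have := adj.isIso_map_unit_app M
  memB_kernel_of_mono_map T _

lemma memB_cokernel_unit_app (adj : T ⊣ S) [IsIso adj.counit] [PreservesFiniteColimits T]
    (M : A) : memB T (cokernel (adj.unit.app M)) :=
  have := adj.isIso_map_unit_app M
  memB_cokernel_of_epi_map T _

lemma isIso_unit_app_of_injective_of_mono (adj : T ⊣ S) [IsIso adj.counit]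
    [PreservesFiniteColimits T] [S.PreservesZeroMorphisms] (C : A) [Injective C]
    [Mono (adj.unit.app C)] : IsIso (adj.unit.app C) := by
  let η := adj.unit.app C
  let v := Injective.factorThru (𝟙 C) η
  have hv : η ≫ v = 𝟙 C := Injective.comp_factorThru _ _
  have hzero : η ≫ (𝟙 _ - v ≫ η) = 0 := by
    rw [Preadditive.comp_sub, reassoc_of% hv, Category.comp_id, sub_self]
  have hq : 𝟙 _ - v ≫ η = 0 := by
    rw [← cokernel.π_desc η _ hzero,
      eq_zero_of_memB adj (cokernel.desc η _ hzero) (memB_cokernel_unit_app adj C), comp_zero]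
  exact ⟨v, hv, (sub_eq_zero.1 hq).symm⟩

end Localization

namespace IsTorsionFunctor

variable {T : A ⥤ Q} {S : Q ⥤ A} {Γ : A ⥤ A} {ε : Γ ⟶ 𝟭 A}

lemma exists_lift (hΓ : IsTorsionFunctor T Γ ε) [PreservesFiniteLimits T]
    [PreservesFiniteColimits T] {N M : A} (f : N ⟶ M) (hN : memB T N) :
    ∃ g : N ⟶ Γ.obj M, g ≫ ε.app M = f := by
  obtain ⟨g, hg⟩ := hΓ.isMax M (image f) (image.ι f) inferInstance
    (ObjectProperty.prop_of_epi (memB T) (factorThruImage f) hN)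
  exact ⟨factorThruImage f ≫ g, by rw [Category.assoc, hg, image.fac]⟩

lemma app_comp_unit_app (hΓ : IsTorsionFunctor T Γ ε) (adj : T ⊣ S) [S.PreservesZeroMorphisms]
    (M : A) : ε.app M ≫ adj.unit.app M = 0 :=
  eq_zero_of_memB adj _ (hΓ.mem M)

lemma exact_unit (hΓ : IsTorsionFunctor T Γ ε) (adj : T ⊣ S) [IsIso adj.counit]
    [PreservesFiniteLimits T] [S.PreservesZeroMorphisms] (M : A) :
    (ShortComplex.mk (ε.app M) (adj.unit.app M) (hΓ.app_comp_unit_app adj M)).Exact := by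
  obtain ⟨k, hk⟩ := hΓ.isMax M _ (kernel.ι (adj.unit.app M)) inferInstance
    (memB_kernel_unit_app adj M)
  rw [ShortComplex.exact_iff_epi_kernel_lift]
  have : IsSplitEpi (kernel.lift _ _ (hΓ.app_comp_unit_app adj M)) :=
    ⟨⟨⟨k, by ext; simpa using hk⟩⟩⟩
  infer_instance

lemma injective_obj (hΓ : IsTorsionFunctor T Γ ε) [PreservesFiniteLimits T]
    [PreservesFiniteColimits T]
    (hInj : ∀ J : ObjectProperty.FullSubcategory (memB T), Injective J → Injective J.obj)
    (I : A) [Injective I] : Injective (Γ.obj I) := by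
  refine hInj ⟨Γ.obj I, hΓ.mem I⟩ ⟨fun {X Y} g f hf => ?_⟩
  have := mono_hom_of_mono_memB T f
  obtain ⟨h, hh⟩ := Injective.factors (g.hom ≫ ε.app I) f.hom
  obtain ⟨h', hh'⟩ := hΓ.exists_lift h Y.property
  have := hΓ.mono I
  refine ⟨ObjectProperty.homMk h', InducedCategory.hom_ext <| (cancel_mono (ε.app I)).1 ?_⟩
  rw [InducedCategory.comp_hom, Category.assoc, ObjectProperty.homMk_hom]
  exact (congrArg (f.hom ≫ ·) hh').trans hh

lemma epi_unit_app_of_injective (hΓ : IsTorsionFunctor T Γ ε) (adj : T ⊣ S) [IsIso adj.counit]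
    [T.Additive] [PreservesFiniteLimits T] [PreservesFiniteColimits T] [S.PreservesZeroMorphisms]
    (I : A) [Injective I] [Injective (Γ.obj I)] : Epi (adj.unit.app I) := by
  have := hΓ.mono I
  let π := cokernel.π (ε.app I)
  let σ := (ShortComplex.ShortExact.mk' (ShortComplex.exact_cokernel (ε.app I)) inferInstance
    inferInstance).splittingOfInjective
  have hπs : π ≫ σ.s = 𝟙 _ - σ.r ≫ ε.app I := σ.g_s
  have hsπ : σ.s ≫ π = 𝟙 (cokernel (ε.app I)) := σ.s_g
  have : Injective (cokernel (ε.app I)) :=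
    Retract.injective (X := cokernel (ε.app I)) (Y := I) ⟨σ.s, π, hsπ⟩
  have hεC : ε.app (cokernel (ε.app I)) = 0 :=
    calc ε.app _ = ε.app _ ≫ σ.s ≫ π := by rw [hsπ]; exact (Category.comp_id _).symm
      _ = Γ.map σ.s ≫ ε.app I ≫ π := (ε.naturality_assoc σ.s π).symm
      _ = 0 := by rw [cokernel.condition, comp_zero]
  have : Mono (adj.unit.app (cokernel (ε.app I))) := (hΓ.exact_unit adj _).mono_g hεC
  have := isIso_unit_app_of_injective_of_mono adj (cokernel (ε.app I))
  have hTε : T.map (ε.app I) = 0 := (hΓ.mem I).eq_of_src _ _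
  have : IsIso (T.map π) := ⟨T.map σ.s,
    by rw [← T.map_comp, hπs, T.map_sub, T.map_comp, hTε, comp_zero, sub_zero, T.map_id],
    by rw [← T.map_comp, hsπ, T.map_id]⟩
  have hnat : adj.unit.app I ≫ S.map (T.map π) = π ≫ adj.unit.app (cokernel (ε.app I)) :=
    (adj.unit.naturality π).symm
  rw [← epi_comp_iff_of_isIso _ (S.map (T.map π)), hnat]
  infer_instance

lemma shortExact_of_injective (hΓ : IsTorsionFunctor T Γ ε) (adj : T ⊣ S) [IsIso adj.counit]
    [T.Additive] [PreservesFiniteLimits T] [PreservesFiniteColimits T] [S.PreservesZeroMorphisms]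
    (hInj : ∀ J : ObjectProperty.FullSubcategory (memB T), Injective J → Injective J.obj)
    (I : A) [Injective I] :
    (ShortComplex.mk (ε.app I) (adj.unit.app I) (hΓ.app_comp_unit_app adj I)).ShortExact :=
  have := hΓ.mono I
  have := hΓ.injective_obj hInj I
  have := hΓ.epi_unit_app_of_injective adj I
  { exact := hΓ.exact_unit adj I }

end IsTorsionFunctor

lemma CategoryTheory.InjectiveResolution.app_comp_toRightDerivedZero' {D : Type*} [Category D]
    [Abelian D] {F₁ F₂ : A ⥤ D} [F₁.Additive] [F₂.Additive] (τ : F₁ ⟶ F₂) {M : A}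
    (I : InjectiveResolution M) :
    τ.app M ≫ I.toRightDerivedZero' F₂ = I.toRightDerivedZero' F₁ ≫
      HomologicalComplex.cyclesMap ((NatTrans.mapHomologicalComplex τ _).app I.cocomplex) 0 := by
  rw [← cancel_mono (HomologicalComplex.iCycles _ 0), Category.assoc, Category.assoc,
    InjectiveResolution.toRightDerivedZero'_comp_iCycles, HomologicalComplex.cyclesMap_i,
    InjectiveResolution.toRightDerivedZero'_comp_iCycles_assoc]
  exact (τ.naturality (I.ι.f 0)).symm

lemma CategoryTheory.InjectiveResolution.isZero_homology_succ_id {M : A}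
    (I : InjectiveResolution M) (n : ℕ) :
    IsZero ((((𝟭 A).mapHomologicalComplex (ComplexShape.up ℕ)).obj I.cocomplex).homology
      (n + 1)) :=
  ((HomologicalComplex.exactAt_iff_isZero_homology _ _).1 (I.cocomplex_exactAt_succ n)).of_iso
    ((HomologicalComplex.homologyFunctor A _ (n + 1)).mapIso
      ((Functor.mapHomologicalComplexIdIso A (ComplexShape.up ℕ)).app I.cocomplex))

section RightDerived

variable {F G : A ⥤ A} [F.Additive] [G.Additive] (α : F ⟶ 𝟭 A) (β : 𝟭 A ⟶ G)
  (hαβ : ∀ M, α.app M ≫ β.app M = 0)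

abbrev cochainShortComplex (K : CochainComplex A ℕ) :
    ShortComplex (CochainComplex A ℕ) :=
  ShortComplex.mk ((NatTrans.mapHomologicalComplex α _).app K)
    ((NatTrans.mapHomologicalComplex β _).app K) (by ext n; exact hαβ _)

def cochainShortComplexMap {K L : CochainComplex A ℕ} (φ : K ⟶ L) :
    cochainShortComplex α β hαβ K ⟶ cochainShortComplex α β hαβ L where
  τ₁ := (F.mapHomologicalComplex _).map φ
  τ₂ := ((𝟭 A).mapHomologicalComplex _).map φ
  τ₃ := (G.mapHomologicalComplex _).map φ
  comm₁₂ := (NatTrans.mapHomologicalComplex α _).naturality φ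
  comm₂₃ := (NatTrans.mapHomologicalComplex β _).naturality φ

variable {α β hαβ}

lemma cochainShortComplex_shortExact
    (hses : ∀ (I : A) [Injective I], (ShortComplex.mk (α.app I) (β.app I) (hαβ I)).ShortExact)
    {M : A} (I : InjectiveResolution M) : (cochainShortComplex α β hαβ I.cocomplex).ShortExact :=
  HomologicalComplex.shortExact_of_degreewise_shortExact _ fun n => hses (I.cocomplex.X n)

lemma exists_exact_epi_connecting [HasInjectiveResolutions A] [PreservesFiniteLimits G]
    (hses : ∀ (I : A) [Injective I], (ShortComplex.mk (α.app I) (β.app I) (hαβ I)).ShortExact)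
    (M : A) :
    ∃ (δ : G.obj M ⟶ (F.rightDerived 1).obj M) (w : β.app M ≫ δ = 0),
      (ShortComplex.mk (β.app M) δ w).Exact ∧ Epi δ := by
  let I := injectiveResolution M
  have hS := cochainShortComplex_shortExact hses I
  have h01 : (ComplexShape.up ℕ).Rel 0 1 := rfl
  let e₁ : (F.rightDerived 1).obj M ≅ (cochainShortComplex α β hαβ I.cocomplex).X₁.homology 1 :=
    I.isoRightDerivedObj F 1
  let e₂ : M ≅ (cochainShortComplex α β hαβ I.cocomplex).X₂.homology 0 :=
    asIso (I.toRightDerivedZero' (𝟭 A)) ≪≫ CochainComplex.isoHomologyπ₀ _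
  let e₃ : G.obj M ≅ (cochainShortComplex α β hαβ I.cocomplex).X₃.homology 0 :=
    asIso (I.toRightDerivedZero' G) ≪≫ CochainComplex.isoHomologyπ₀ _
  have hsq : β.app M ≫ e₃.hom =
      e₂.hom ≫ HomologicalComplex.homologyMap (cochainShortComplex α β hαβ I.cocomplex).g 0 := by
    simp only [e₃, e₂, Iso.trans_hom, asIso_hom, HomologicalComplex.isoHomologyπ_hom]
    rw [reassoc_of% I.app_comp_toRightDerivedZero' β, Category.assoc,
      HomologicalComplex.homologyπ_naturality]
  have hexact : (ShortComplex.mk (β.app M) (e₃.hom ≫ hS.δ 0 1 h01 ≫ e₁.inv) (by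
      rw [← Category.assoc, hsq, Category.assoc, hS.comp_δ_assoc, zero_comp, comp_zero])).Exact :=
    ShortComplex.exact_of_iso (ShortComplex.isoMk e₂ e₃ e₁ hsq.symm (by simp)).symm
      (hS.homology_exact₃ 0 1 h01)
  have : Epi (hS.δ 0 1 h01) := (hS.homology_exact₁ 0 1 h01).epi_f
    ((I.isZero_homology_succ_id 0).eq_of_tgt _ _)
  exact ⟨_, _, hexact, inferInstance⟩

lemma isIso_δ_succ {M : A} {I : InjectiveResolution M}
    (hS : (cochainShortComplex α β hαβ I.cocomplex).ShortExact) (k : ℕ) :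
    IsIso (hS.δ (k + 1) (k + 1 + 1) (ComplexShape.up_mk _ _ rfl)) :=
  have : Mono (hS.δ (k + 1) (k + 1 + 1) (ComplexShape.up_mk _ _ rfl)) :=
    (hS.homology_exact₃ _ _ _).mono_g ((I.isZero_homology_succ_id k).eq_of_src _ _)
  have : Epi (hS.δ (k + 1) (k + 1 + 1) (ComplexShape.up_mk _ _ rfl)) :=
    (hS.homology_exact₁ _ _ _).epi_f ((I.isZero_homology_succ_id (k + 1)).eq_of_tgt _ _)
  isIso_of_mono_of_epi _

noncomputable def rightDerivedδ [HasInjectiveResolutions A]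
    (hses : ∀ (I : A) [Injective I], (ShortComplex.mk (α.app I) (β.app I) (hαβ I)).ShortExact)
    (n : ℕ) : G.rightDerived n ⟶ F.rightDerived (n + 1) where
  app M := ((injectiveResolution M).isoRightDerivedObj G n).hom ≫
    (cochainShortComplex_shortExact hses (injectiveResolution M)).δ n (n + 1)
      (ComplexShape.up_mk _ _ rfl) ≫ ((injectiveResolution M).isoRightDerivedObj F (n + 1)).inv
  naturality {M N} f := by
    let φ := InjectiveResolution.desc f (injectiveResolution N) (injectiveResolution M)
    have comm := InjectiveResolution.desc_commutes_zero f (injectiveResolution N)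
      (injectiveResolution M)
    exact (CommSq.horiz_comp
      ⟨(InjectiveResolution.isoRightDerivedObj_hom_naturality f _ _ φ comm G n).symm⟩ <|
      CommSq.horiz_comp ⟨HomologicalComplex.HomologySequence.δ_naturality
        (cochainShortComplexMap α β hαβ φ) (cochainShortComplex_shortExact hses _)
        (cochainShortComplex_shortExact hses _) n (n + 1) _⟩
      ⟨InjectiveResolution.isoRightDerivedObj_inv_naturality f _ _ φ comm F (n + 1)⟩).w.symm

lemma isIso_rightDerivedδ_succ [HasInjectiveResolutions A]
    (hses : ∀ (I : A) [Injective I], (ShortComplex.mk (α.app I) (β.app I) (hαβ I)).ShortExact)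
    (k : ℕ) : IsIso (rightDerivedδ hses (k + 1)) :=
  have : ∀ M, IsIso ((rightDerivedδ hses (k + 1)).app M) := fun _ =>
    IsIso.comp_isIso' (Iso.isIso_hom _)
      (IsIso.comp_isIso' (isIso_δ_succ (cochainShortComplex_shortExact hses _) k) (Iso.isIso_inv _))
  NatIso.isIso_of_isIso_app _

end RightDerived

theorem statement5_general
    -- `A` is Grothendieck abelian (in particular it has enough injectives):
    [EnoughInjectives A]
    -- the localization functor `T` and the section functor `S`:
    (T : A ⥤ Q) (S : Q ⥤ A) (adj : T ⊣ S)
    [T.Additive] [S.Additive] [PreservesFiniteLimits T] [IsIso adj.counit]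
    -- property (Inj): injective objects of `B` remain injective in `A`:
    (hInj : ∀ J : ObjectProperty.FullSubcategory (memB T), Injective J → Injective J.obj)
    -- the torsion functor `Γ`:
    (Γ : A ⥤ A) (ε : Γ ⟶ 𝟭 A) [Γ.Additive] (hΓ : IsTorsionFunctor T Γ ε) :
    -- the exact sequence `0 → Γ(M) → M → Σ(M) → R¹Γ(M) → 0`:
    (∀ M : A,
      Mono (ε.app M) ∧
      ∃ (w : ε.app M ≫ adj.unit.app M = 0)
        (δ : (T ⋙ S).obj M ⟶ (Γ.rightDerived 1).obj M)
        (w' : adj.unit.app M ≫ δ = 0),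
        (ShortComplex.mk (ε.app M) (adj.unit.app M) w).Exact ∧
        (ShortComplex.mk (adj.unit.app M) δ w').Exact ∧
        Epi δ) ∧
    -- natural isomorphisms `R^iΣ ≅ R^{i+1}Γ` for `i ≥ 1`:
    (∀ i : ℕ, 1 ≤ i →
      Nonempty ((T ⋙ S).rightDerived i ≅ Γ.rightDerived (i + 1))) := by
  have : PreservesColimits T := adj.leftAdjoint_preservesColimits
  have : PreservesLimits S := adj.rightAdjoint_preservesLimits
  have hses := hΓ.shortExact_of_injective adj hInj
  refine ⟨fun M => ⟨hΓ.mono M, hΓ.app_comp_unit_app adj M, ?_⟩, fun i hi => ?_⟩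
  · obtain ⟨δ, w, hexact, hepi⟩ := exists_exact_epi_connecting hses M
    exact ⟨δ, w, hΓ.exact_unit adj M, hexact, hepi⟩
  · obtain ⟨k, rfl⟩ := Nat.exists_eq_add_of_le' hi
    have := isIso_rightDerivedδ_succ hses k
    exact ⟨asIso (rightDerivedδ hses (k + 1))⟩

theorem statement5
    -- `A` is Grothendieck abelian (in particular it has enough injectives):
    [HasColimits A] [AB5 A] [HasSeparator A] [EnoughInjectives A]
    -- the localization functor `T` and the section functor `S`:
    (T : A ⥤ Q) (S : Q ⥤ A) (adj : T ⊣ S)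
    [T.Additive] [S.Additive] [PreservesFiniteLimits T] [IsIso adj.counit]
    -- property (Inj): injective objects of `B` remain injective in `A`:
    (hInj : ∀ J : ObjectProperty.FullSubcategory (memB T), Injective J → Injective J.obj)
    -- the torsion functor `Γ`:
    (Γ : A ⥤ A) (ε : Γ ⟶ 𝟭 A) [Γ.Additive] (hΓ : IsTorsionFunctor T Γ ε) :
    -- the exact sequence `0 → Γ(M) → M → Σ(M) → R¹Γ(M) → 0`:
    (∀ M : A,
      Mono (ε.app M) ∧
      ∃ (w : ε.app M ≫ adj.unit.app M = 0)
        (δ : (T ⋙ S).obj M ⟶ (Γ.rightDerived 1).obj M)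
        (w' : adj.unit.app M ≫ δ = 0),
        (ShortComplex.mk (ε.app M) (adj.unit.app M) w).Exact ∧
        (ShortComplex.mk (adj.unit.app M) δ w').Exact ∧
        Epi δ) ∧
    -- natural isomorphisms `R^iΣ ≅ R^{i+1}Γ` for `i ≥ 1`:
    (∀ i : ℕ, 1 ≤ i →
      Nonempty ((T ⋙ S).rightDerived i ≅ Γ.rightDerived (i + 1))) :=
  statement5_general T S adj hInj Γ ε hΓ
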